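/- Fix L ∈ (0,1] and ε > 0 and define γ_k(θ) recursively as above. For every n ∈ ℕ there exists θ_n ∈ (0, π/4] such that for all θ ∈ (0, θ_n) and all k ≤ n, γ_k(θ) < 1, and moreover 0 < γ₁(θ) < γ₂(θ) < ⋯ < γ_n(θ). -/

import Mathlib

open Real Filter Topology Asymptotics

/-! As `θ → 0⁺` every `γ_k(θ)` is `O(θ)`. Inductively, the numerator
`2^k - cos θ · ∏ (1 + √(1 - γ_j²))` is `O(θ²)`: `1 - cos θ ≤ θ²/2`, and each factor falls short
of `2` by `1 - √(1 - γ_j²) ≤ γ_j² = O(θ²)`. Dividing by `sin θ ~ θ` gives `O(θ)`, so near `0`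
all `γ_k` stay in `(0, 1)` and the recursion stays defined. Monotonicity is exact: the numerators
of `γ_{k+1}` and `γ_k` differ by `2^(k-1) - cos θ · P · √(1 - γ_k²)`, which is positive since the
previous product `P` is at most `2^(k-1)`. -/

theorem pow_card_sub_prod_le {ι : Type*} {s : Finset ι} {a : ι → ℝ} {c : ℝ}
    (h0 : ∀ i ∈ s, 0 ≤ a i) (hc : ∀ i ∈ s, a i ≤ c) :
    c ^ s.card - ∏ i ∈ s, a i ≤ c ^ (s.card - 1) * ∑ i ∈ s, (c - a i) := by
  classical
  induction s using Finset.induction_on with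
  | empty => simp
  | insert i s hi ih =>
    simp only [Finset.forall_mem_insert] at h0 hc
    have hprod : ∏ j ∈ s, a j ≤ c ^ s.card :=
      (Finset.prod_le_prod h0.2 hc.2).trans_eq (Finset.prod_const c)
    have hs : c * (c ^ s.card - ∏ j ∈ s, a j) ≤ c ^ s.card * ∑ j ∈ s, (c - a j) := by
      rcases s.eq_empty_or_nonempty with rfl | hne
      · simp
      · calc c * (c ^ s.card - ∏ j ∈ s, a j)
            ≤ c * (c ^ (s.card - 1) * ∑ j ∈ s, (c - a j)) :=
              mul_le_mul_of_nonneg_left (ih h0.2 hc.2) (h0.1.trans hc.1)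
          _ = c ^ s.card * ∑ j ∈ s, (c - a j) := by
              rw [← mul_assoc, mul_comm c, pow_sub_one_mul hne.card_ne_zero]
    rw [Finset.prod_insert hi, Finset.sum_insert hi, Finset.card_insert_of_notMem hi,
      Nat.add_sub_cancel, pow_succ]
    nlinarith [mul_le_mul_of_nonneg_right hc.1 (sub_nonneg.2 hprod)]

theorem one_sub_sqrt_one_sub_sq_le (x : ℝ) : 1 - √(1 - x ^ 2) ≤ x ^ 2 := by
  linarith [Real.le_sqrt_self_iff.2 (by nlinarith : 1 - x ^ 2 ≤ 1)]

theorem sqrt_one_sub_sq_le_one (x : ℝ) : √(1 - x ^ 2) ≤ 1 :=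
  Real.sqrt_le_one.2 (by nlinarith)

theorem sqrt_one_sub_sq_lt_one {x : ℝ} (hx : x ≠ 0) : √(1 - x ^ 2) < 1 :=
  (Real.sqrt_lt' one_pos).2 (by nlinarith [sq_pos_of_ne_zero hx])

theorem Asymptotics.IsBigO.div_sin {l : Filter ℝ} {f : ℝ → ℝ} (hl : l ≤ 𝓝 0)
    (hf : f =O[l] (· ^ 2)) : (fun θ => f θ / sin θ) =O[l] id := by
  have hsin : (fun θ => (sin θ)⁻¹) =O[l] (fun θ => θ⁻¹) :=
    (Real.isEquivalent_sin.inv.isBigO).mono hl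
  refine (hf.mul hsin).congr (fun θ => (div_eq_mul_inv _ _).symm) fun θ => ?_
  simp only [sq, mul_self_mul_inv, id]

noncomputable def gammaProd (g : ℕ → ℝ → ℝ) (k : ℕ) (θ : ℝ) : ℝ :=
  ∏ j ∈ Finset.Icc 1 k, (1 + √(1 - g j θ ^ 2))

/-- The recursion, shifted so that `k = 0` is the formula for `γ₁` (`gammaProd g 0 θ = 1`). -/
def IsGammaSeq (L ε : ℝ) (g : ℕ → ℝ → ℝ) : Prop :=
  ∀ k θ, θ ∈ Set.Ioc 0 (π / 4) → (∀ j ∈ Finset.Icc 1 k, g j θ ∈ Set.Ioo 0 1) →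
    g (k + 1) θ = (1 + ε) * (2 ^ k - cos θ * gammaProd g k θ) / (L * sin θ)

section gammaProd

variable (g : ℕ → ℝ → ℝ) (k : ℕ) (θ : ℝ)

theorem gammaProd_succ :
    gammaProd g (k + 1) θ = gammaProd g k θ * (1 + √(1 - g (k + 1) θ ^ 2)) :=
  Finset.prod_Icc_succ_top (by omega) _

theorem gammaProd_pos : 0 < gammaProd g k θ :=
  Finset.prod_pos fun _ _ => by positivity

theorem gammaProd_le_two_pow : gammaProd g k θ ≤ 2 ^ k := by
  have h := (Finset.prod_le_prod (s := Finset.Icc 1 k) (f := fun j => 1 + √(1 - g j θ ^ 2))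
    (fun j _ => by positivity)
    fun j _ => by linarith [sqrt_one_sub_sq_le_one (g j θ)]).trans_eq (Finset.prod_const (2 : ℝ))
  rwa [Nat.card_Icc, Nat.add_sub_cancel] at h

theorem two_pow_sub_gammaProd_le :
    2 ^ k - gammaProd g k θ ≤ 2 ^ k * ∑ j ∈ Finset.Icc 1 k, g j θ ^ 2 := by
  have h := pow_card_sub_prod_le (s := Finset.Icc 1 k) (a := fun j => 1 + √(1 - g j θ ^ 2))
    (c := 2) (fun j _ => by positivity) fun j _ => by linarith [sqrt_one_sub_sq_le_one (g j θ)]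
  rw [Nat.card_Icc, Nat.add_sub_cancel] at h
  have hsum : ∑ j ∈ Finset.Icc 1 k, (2 - (1 + √(1 - g j θ ^ 2))) ≤
      ∑ j ∈ Finset.Icc 1 k, g j θ ^ 2 :=
    Finset.sum_le_sum fun j _ => by linarith [one_sub_sqrt_one_sub_sq_le (g j θ)]
  have hpow : (2 : ℝ) ^ (k - 1) ≤ 2 ^ k := pow_le_pow_right₀ one_le_two (Nat.sub_le k 1)
  calc 2 ^ k - gammaProd g k θ ≤ 2 ^ (k - 1) * ∑ j ∈ Finset.Icc 1 k, g j θ ^ 2 :=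
        h.trans (mul_le_mul_of_nonneg_left hsum (by positivity))
    _ ≤ 2 ^ k * ∑ j ∈ Finset.Icc 1 k, g j θ ^ 2 :=
        mul_le_mul_of_nonneg_right hpow (Finset.sum_nonneg fun j _ => by positivity)

theorem two_pow_sub_cos_mul_gammaProd_pos (hθ : cos θ < 1) :
    0 < 2 ^ k - cos θ * gammaProd g k θ := by
  nlinarith [gammaProd_pos g k θ, gammaProd_le_two_pow g k θ]

theorem abs_two_pow_sub_cos_mul_gammaProd_le :
    |2 ^ k - cos θ * gammaProd g k θ| ≤ 2 ^ k * (θ ^ 2 + ∑ j ∈ Finset.Icc 1 k, g j θ ^ 2) := by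
  have hP := gammaProd_pos g k θ
  have hP2 := gammaProd_le_two_pow g k θ
  have hcos := Real.cos_le_one θ
  rw [abs_of_nonneg (by nlinarith)]
  nlinarith [two_pow_sub_gammaProd_le g k θ, Real.one_sub_sq_div_two_le_cos (x := θ),
    mul_le_mul_of_nonneg_right hcos (sub_nonneg.2 hP2)]

end gammaProd

theorem isBigO_two_pow_sub_cos_mul_gammaProd {l : Filter ℝ} {g : ℕ → ℝ → ℝ} {k : ℕ}
    (hg : ∀ j ∈ Finset.Icc 1 k, g j =O[l] id) :
    (fun θ => 2 ^ k - cos θ * gammaProd g k θ) =O[l] (· ^ 2) := by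
  have hsum : (fun θ => θ ^ 2 + ∑ j ∈ Finset.Icc 1 k, g j θ ^ 2) =O[l] (· ^ 2) :=
    (isBigO_refl _ l).add (IsBigO.fun_sum fun j hj => (hg j hj).pow 2)
  refine (isBigO_of_le' (c := 2 ^ k) l fun θ => ?_).trans hsum
  rw [Real.norm_eq_abs, Real.norm_of_nonneg (by positivity)]
  exact abs_two_pow_sub_cos_mul_gammaProd_le g k θ

namespace IsGammaSeq

variable {L ε : ℝ} {g : ℕ → ℝ → ℝ}

theorem of_rec
    (h1 : ∀ θ ∈ Set.Ioc 0 (π / 4), g 1 θ = (1 + ε) * (1 - cos θ) / (L * sin θ))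
    (hrec : ∀ n, 2 ≤ n → ∀ θ ∈ Set.Ioc 0 (π / 4),
      (∀ j, 1 ≤ j → j < n → g j θ ∈ Set.Ioo (0 : ℝ) 1) →
      g n θ = (1 + ε) *
        ((2 : ℝ) ^ (n - 1) - cos θ * ∏ j ∈ Finset.Icc 1 (n - 1), (1 + √(1 - g j θ ^ 2))) /
        (L * sin θ)) :
    IsGammaSeq L ε g := by
  rintro (_ | k) θ hθ hj
  · simp [gammaProd, h1 θ hθ]
  · exact hrec (k + 2) (by omega) θ hθ fun j hj1 hj2 => hj j (Finset.mem_Icc.2 ⟨hj1, by omega⟩)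

variable (hg : IsGammaSeq L ε g) (hL : 0 < L) (hε : 0 < 1 + ε)
include hg hL hε

theorem eventually_mem_Ioo_and_isBigO_succ {n : ℕ}
    (hmem : ∀ᶠ θ in 𝓝[>] 0, ∀ j ∈ Finset.Icc 1 n, g j θ ∈ Set.Ioo 0 1)
    (hO : ∀ j ∈ Finset.Icc 1 n, g j =O[𝓝[>] 0] id) :
    (∀ᶠ θ in 𝓝[>] 0, g (n + 1) θ ∈ Set.Ioo 0 1) ∧ g (n + 1) =O[𝓝[>] 0] id := by
  have hsmall : ∀ᶠ θ in 𝓝[>] (0 : ℝ), θ ∈ Set.Ioo 0 (π / 4) := Ioo_mem_nhdsGT (by positivity)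
  have heq : g (n + 1) =ᶠ[𝓝[>] 0]
      fun θ => (1 + ε) / L * ((2 ^ n - cos θ * gammaProd g n θ) / sin θ) := by
    filter_upwards [hsmall, hmem] with θ hθ hj
    rw [hg n θ ⟨hθ.1, hθ.2.le⟩ hj]
    ring
  have hbigO : g (n + 1) =O[𝓝[>] 0] id :=
    (((isBigO_two_pow_sub_cos_mul_gammaProd hO).div_sin nhdsWithin_le_nhds).const_mul_left _
      ).congr' heq.symm EventuallyEq.rfl
  have hlt : ∀ᶠ θ in 𝓝[>] 0, g (n + 1) θ < 1 :=
    (hbigO.trans_tendsto (tendsto_id.mono_left nhdsWithin_le_nhds)).eventually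
      (gt_mem_nhds one_pos)
  refine ⟨?_, hbigO⟩
  filter_upwards [hsmall, heq, hlt] with θ hθ hgθ hlt
  have hsin : 0 < sin θ := sin_pos_of_pos_of_lt_pi hθ.1 (by linarith [hθ.2, pi_pos])
  have hcos : cos θ < 1 := by
    simpa using cos_lt_cos_of_nonneg_of_le_pi le_rfl (by linarith [hθ.2, pi_pos]) hθ.1
  refine ⟨?_, hlt⟩
  rw [hgθ]
  have := two_pow_sub_cos_mul_gammaProd_pos g n θ hcos
  positivity

theorem eventually_mem_Ioo_and_isBigO (n : ℕ) :
    (∀ᶠ θ in 𝓝[>] 0, ∀ j ∈ Finset.Icc 1 n, g j θ ∈ Set.Ioo 0 1) ∧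
      ∀ j ∈ Finset.Icc 1 n, g j =O[𝓝[>] 0] id := by
  induction n with
  | zero => simp
  | succ n ih =>
    obtain ⟨hmem, hO⟩ := ih
    obtain ⟨hmem', hO'⟩ := hg.eventually_mem_Ioo_and_isBigO_succ hL hε hmem hO
    rw [← Finset.insert_Icc_right_eq_Icc_add_one (by omega)]
    simp only [Finset.forall_mem_insert]
    exact ⟨hmem'.and hmem, hO', hO⟩

theorem lt_succ {k : ℕ} {θ : ℝ} (hθ : θ ∈ Set.Ioc 0 (π / 4))
    (hj : ∀ j ∈ Finset.Icc 1 (k + 1), g j θ ∈ Set.Ioo 0 1) :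
    g (k + 1) θ < g (k + 2) θ := by
  have hj' : ∀ j ∈ Finset.Icc 1 k, g j θ ∈ Set.Ioo 0 1 := fun j h =>
    hj j (Finset.Icc_subset_Icc_right k.le_succ h)
  have hsin : 0 < sin θ := sin_pos_of_pos_of_lt_pi hθ.1 (by linarith [hθ.2, pi_pos])
  have hs := sqrt_one_sub_sq_lt_one (hj (k + 1) (by simp)).1.ne'
  rw [hg k θ hθ hj', hg (k + 1) θ hθ hj, gammaProd_succ, pow_succ]
  refine div_lt_div_of_pos_right (mul_lt_mul_of_pos_left ?_ hε) (by positivity)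
  have hP := gammaProd_pos g k θ
  nlinarith [gammaProd_le_two_pow g k θ, cos_le_one θ,
    mul_nonneg hP.le (Real.sqrt_nonneg (1 - g (k + 1) θ ^ 2))]

end IsGammaSeq

theorem gamma_sequence_exists_theta_general
    (L ε : ℝ) (hL0 : 0 < L) (hε : 0 < ε)
    (g : ℕ → ℝ → ℝ)
    (h1 : ∀ θ ∈ Set.Ioc 0 (π / 4),
      g 1 θ = (1 + ε) * (1 - Real.cos θ) / (L * Real.sin θ))
    (hrec : ∀ n, 2 ≤ n → ∀ θ ∈ Set.Ioc 0 (π / 4),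
      (∀ j, 1 ≤ j → j < n → g j θ ∈ Set.Ioo (0 : ℝ) 1) →
      g n θ = (1 + ε) *
        ((2 : ℝ) ^ (n - 1) -
          Real.cos θ * ∏ j ∈ Finset.Icc 1 (n - 1), (1 + Real.sqrt (1 - g j θ ^ 2))) /
        (L * Real.sin θ)) :
    ∀ n, 1 ≤ n → ∃ θn ∈ Set.Ioc (0 : ℝ) (π / 4),
      ∀ θ ∈ Set.Ioo (0 : ℝ) θn,
        (∀ k, 1 ≤ k → k ≤ n → g k θ < 1) ∧
        0 < g 1 θ ∧
        (∀ k, 1 ≤ k → k < n → g k θ < g (k + 1) θ) := by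
  have hg := IsGammaSeq.of_rec h1 hrec
  have hε' : 0 < 1 + ε := by linarith
  intro n hn
  have hπ : (0 : ℝ) < π / 4 := by positivity
  obtain ⟨θn, hθn, hsub⟩ := (mem_nhdsGT_iff_exists_mem_Ioc_Ioo_subset hπ).1
    (hg.eventually_mem_Ioo_and_isBigO hL0 hε' n).1
  refine ⟨θn, hθn, fun θ hθ => ?_⟩
  have hmem : ∀ j ∈ Finset.Icc 1 n, g j θ ∈ Set.Ioo 0 1 := hsub hθ
  refine ⟨fun k hk1 hkn => (hmem k (Finset.mem_Icc.2 ⟨hk1, hkn⟩)).2,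
    (hmem 1 (Finset.mem_Icc.2 ⟨le_rfl, hn⟩)).1, fun k hk1 hkn => ?_⟩
  obtain ⟨m, rfl⟩ : ∃ m, k = m + 1 := ⟨k - 1, by omega⟩
  exact hg.lt_succ hL0 hε' ⟨hθ.1, hθ.2.le.trans hθn.2⟩
    fun j hj => hmem j (Finset.Icc_subset_Icc_right (by omega) hj)

/-- For the recursively defined family `γ_k(θ)`, for every `n` there exists
`θ_n ∈ (0, π/4]` such that for all `θ ∈ (0, θ_n)` all terms `γ_1(θ),…,γ_n(θ)`
are `< 1`, and `0 < γ₁(θ) < γ₂(θ) < ⋯ < γ_n(θ)`. -/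
theorem gamma_sequence_exists_theta
    (L ε : ℝ) (hL0 : 0 < L) (hL1 : L ≤ 1) (hε : 0 < ε)
    (g : ℕ → ℝ → ℝ)
    (h1 : ∀ θ ∈ Set.Ioc 0 (π / 4),
      g 1 θ = (1 + ε) * (1 - Real.cos θ) / (L * Real.sin θ))
    (hrec : ∀ n, 2 ≤ n → ∀ θ ∈ Set.Ioc 0 (π / 4),
      (∀ j, 1 ≤ j → j < n → g j θ ∈ Set.Ioo (0 : ℝ) 1) →
      g n θ = (1 + ε) *
        ((2 : ℝ) ^ (n - 1) -
          Real.cos θ * ∏ j ∈ Finset.Icc 1 (n - 1), (1 + Real.sqrt (1 - g j θ ^ 2))) /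
        (L * Real.sin θ)) :
    ∀ n, 1 ≤ n → ∃ θn ∈ Set.Ioc (0 : ℝ) (π / 4),
      ∀ θ ∈ Set.Ioo (0 : ℝ) θn,
        (∀ k, 1 ≤ k → k ≤ n → g k θ < 1) ∧
        0 < g 1 θ ∧
        (∀ k, 1 ≤ k → k < n → g k θ < g (k + 1) θ) :=
  gamma_sequence_exists_theta_general L ε hL0 hε g h1 hrec
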